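/- arXiv:2302.11829 — 2 statements merged into one kernel-verified Lean document; each statement's English description precedes it below -/
import Mathlib

section
/- For any nonempty subset S ⊆ [n] of the follower's actions, a cover of S with respect to u^L exists if and only if M_S > M_{[n]}. -/
open scoped Classical
open Finset

noncomputable section

/-- The leader's mixed-strategy simplex Δ_m. -/
def simplex (m : ℕ) : Set (Fin m → ℝ) := stdSimplex ℝ (Fin m)

/-- Linear extension of a payoff matrix to mixed strategies: u(x,j) = ∑ i, x i * u i j. -/
def pay {m n : ℕ} (u : Fin m → Fin n → ℝ) (x : Fin m → ℝ) (j : Fin n) : ℝ :=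
  ∑ i, x i * u i j

/-- Inner product on ℝ^m. -/
def dot {m : ℕ} (a x : Fin m → ℝ) : ℝ := ∑ i, a i * x i

/-- min_{j ∈ S} u(x, j). -/
def minOnS {m n : ℕ} (u : Fin m → Fin n → ℝ) (S : Set (Fin n)) (x : Fin m → ℝ) : ℝ :=
  sInf ((fun j => pay u x j) '' S)

/-- The leader's maximin value M_S = max_{x∈Δ_m} min_{j∈S} u(x,j). -/
def Mval {m n : ℕ} (u : Fin m → Fin n → ℝ) (S : Set (Fin n)) : ℝ :=
  sSup (minOnS u S '' simplex m)

/-- The set 𝓜_S of maximin strategies. -/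
def argMM {m n : ℕ} (u : Fin m → Fin n → ℝ) (S : Set (Fin n)) : Set (Fin m → ℝ) :=
  {x ∈ simplex m | minOnS u S x = Mval u S}

/-- The follower's best-response set BR(x) = argmax_j uF(x,j). -/
def BR {m n : ℕ} (uF : Fin m → Fin n → ℝ) (x : Fin m → ℝ) : Set (Fin n) :=
  {j | ∀ j', pay uF x j' ≤ pay uF x j}

/-- Strong Stackelberg equilibrium of the game (uL, uF). -/
def SSE {m n : ℕ} (uL uF : Fin m → Fin n → ℝ) (x : Fin m → ℝ) (j : Fin n) : Prop :=
  x ∈ simplex m ∧ j ∈ BR uF x ∧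
    ∀ x' ∈ simplex m, ∀ j' ∈ BR uF x', pay uL x' j' ≤ pay uL x j

/-- (x, j) is inducible with respect to the leader payoff uL. -/
def Inducible {m n : ℕ} (uL : Fin m → Fin n → ℝ) (x : Fin m → ℝ) (j : Fin n) : Prop :=
  ∃ uF : Fin m → Fin n → ℝ, SSE uL uF x j

/-- μ is a (maximin-)cover of S w.r.t. uL: max_{x∈𝓜_S} max_{j∈BR(x)} uL(x,j) < M_S. -/
def IsCover {m n : ℕ} (uL μ : Fin m → Fin n → ℝ) (S : Set (Fin n)) : Prop :=
  ∀ x ∈ argMM uL S, ∀ j ∈ BR μ x, pay uL x j < Mval uL S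

/-- μ is a proper cover of S w.r.t. uL. -/
def IsProperCover {m n : ℕ} (uL μ : Fin m → Fin n → ℝ) (S : Set (Fin n)) : Prop :=
  IsCover uL μ S ∧ ∀ x ∈ simplex m, ∀ j ∈ S, j ∉ BR μ x

/-! Taking the follower payoff `-uL` makes the follower always answer with a worst action for the
leader, so every leader strategy in `𝓜_S` yields at most `M_{[n]}`: this is a cover as soon as
`M_{[n]} < M_S`. Conversely, if `M_S ≤ M_{[n]}`, a maximin strategy `x` for all of `[n]` is also
maximin for `S`, and at `x` every follower action pays the leader at least `M_{[n]} ≥ M_S`, so no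
follower payoff is a cover. -/

section Maximin

variable {m n : ℕ} (u : Fin m → Fin n → ℝ)

lemma continuous_pay (j : Fin n) : Continuous fun x => pay u x j :=
  continuous_finsetSum _ fun i _ => (continuous_apply i).mul continuous_const

lemma pay_neg (x : Fin m → ℝ) (j : Fin n) : pay (-u) x j = -pay u x j := by
  simp only [pay, Pi.neg_apply, mul_neg, Finset.sum_neg_distrib]

lemma minOnS_le_pay {S : Set (Fin n)} {j : Fin n} (hj : j ∈ S) (x : Fin m → ℝ) :
    minOnS u S x ≤ pay u x j :=
  csInf_le (S.toFinite.image _).bddBelow ⟨j, hj, rfl⟩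

lemma le_minOnS {S : Set (Fin n)} (hS : S.Nonempty) {x : Fin m → ℝ} {a : ℝ}
    (h : ∀ j ∈ S, a ≤ pay u x j) : a ≤ minOnS u S x :=
  le_csInf (hS.image _) (by rintro _ ⟨j, hj, rfl⟩; exact h j hj)

lemma minOnS_anti {S T : Set (Fin n)} (hS : S.Nonempty) (hST : S ⊆ T) (x : Fin m → ℝ) :
    minOnS u T x ≤ minOnS u S x :=
  le_minOnS u hS fun _ hj => minOnS_le_pay u (hST hj) x

lemma minOnS_eq_inf' {S : Set (Fin n)} (hS : S.Nonempty) (x : Fin m → ℝ) :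
    minOnS u S x = S.toFinset.inf' (Set.toFinset_nonempty.2 hS) (pay u x) := by
  rw [Finset.inf'_eq_csInf_image, Set.coe_toFinset, minOnS]

lemma continuous_minOnS {S : Set (Fin n)} (hS : S.Nonempty) : Continuous (minOnS u S) := by
  simp only [funext (minOnS_eq_inf' u hS)]
  exact Continuous.finset_inf'_apply _ fun j _ => continuous_pay u j

lemma bddAbove_minOnS_image {S : Set (Fin n)} (hS : S.Nonempty) :
    BddAbove (minOnS u S '' simplex m) := by
  obtain ⟨j, hj⟩ := hS
  obtain ⟨b, hb⟩ := (isCompact_stdSimplex ℝ (Fin m)).bddAbove_image (continuous_pay u j).continuousOn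
  exact ⟨b, by rintro _ ⟨x, hx, rfl⟩; exact (minOnS_le_pay u hj x).trans (hb ⟨x, hx, rfl⟩)⟩

lemma minOnS_le_Mval {S : Set (Fin n)} (hS : S.Nonempty) {x : Fin m → ℝ} (hx : x ∈ simplex m) :
    minOnS u S x ≤ Mval u S :=
  le_csSup (bddAbove_minOnS_image u hS) ⟨x, hx, rfl⟩

lemma argMM_nonempty (hm : 0 < m) {S : Set (Fin n)} (hS : S.Nonempty) :
    (argMM u S).Nonempty := by
  have hsimplex : (simplex m).Nonempty := ⟨Pi.single ⟨0, hm⟩ 1, single_mem_stdSimplex ℝ _⟩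
  obtain ⟨x, hx, hmax⟩ := (isCompact_stdSimplex ℝ (Fin m)).exists_isMaxOn hsimplex
    (continuous_minOnS u hS).continuousOn
  have hgreatest : IsGreatest (minOnS u S '' simplex m) (minOnS u S x) :=
    ⟨⟨x, hx, rfl⟩, by rintro _ ⟨y, hy, rfl⟩; exact hmax hy⟩
  exact ⟨x, hx, hgreatest.csSup_eq.symm⟩

lemma mem_argMM_of_Mval_le {S T : Set (Fin n)} (hS : S.Nonempty) (hST : S ⊆ T)
    (hle : Mval u S ≤ Mval u T) {x : Fin m → ℝ} (hx : x ∈ argMM u T) : x ∈ argMM u S := by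
  refine ⟨hx.1, le_antisymm (minOnS_le_Mval u hS hx.1) ?_⟩
  calc Mval u S ≤ Mval u T := hle
    _ = minOnS u T x := hx.2.symm
    _ ≤ minOnS u S x := minOnS_anti u hS hST x

lemma BR_nonempty [NeZero n] (x : Fin m → ℝ) : (BR u x).Nonempty :=
  (Finite.exists_max (pay u x)).imp fun _ hj => hj

lemma pay_le_minOnS_univ_of_mem_BR_neg {x : Fin m → ℝ} {j : Fin n} (hj : j ∈ BR (-u) x) :
    pay u x j ≤ minOnS u Set.univ x :=
  le_minOnS u ⟨j, Set.mem_univ j⟩ fun j' _ => by simpa only [pay_neg, neg_le_neg_iff] using hj j'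

end Maximin

theorem cover_exists_iff_gt_maximin_general {m n : ℕ} (hm : 0 < m)
    (uL : Fin m → Fin n → ℝ) (S : Set (Fin n)) (hS : S.Nonempty) :
    (∃ μ : Fin m → Fin n → ℝ, IsCover uL μ S) ↔ Mval uL Set.univ < Mval uL S := by
  have : NeZero n := .of_pos hS.some.pos
  constructor
  · rintro ⟨μ, hμ⟩
    by_contra! hle
    obtain ⟨x, hx⟩ := argMM_nonempty uL hm Set.univ_nonempty
    obtain ⟨j, hj⟩ := BR_nonempty μ x
    have hxS := mem_argMM_of_Mval_le uL hS (Set.subset_univ S) hle hx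
    have hMj : Mval uL Set.univ ≤ pay uL x j := hx.2 ▸ minOnS_le_pay uL (Set.mem_univ j) x
    exact (hμ x hxS j hj).not_ge (hle.trans hMj)
  · intro hlt
    refine ⟨-uL, fun x hx j hj => ?_⟩
    calc pay uL x j ≤ minOnS uL Set.univ x := pay_le_minOnS_univ_of_mem_BR_neg uL hj
      _ ≤ Mval uL Set.univ := minOnS_le_Mval uL Set.univ_nonempty hx.1
      _ < Mval uL S := hlt

/-- a cover of S exists iff M_S > M_{[n]}. -/
theorem cover_exists_iff_gt_maximin {m n : ℕ} (hm : 0 < m) (hn : 0 < n)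
    (uL : Fin m → Fin n → ℝ) (S : Set (Fin n)) (hS : S.Nonempty) :
    (∃ μ : Fin m → Fin n → ℝ, IsCover uL μ S) ↔ Mval uL Set.univ < Mval uL S :=
  cover_exists_iff_gt_maximin_general hm uL S hS
end
end

section
/- With the construction of ũ_g^F below: for every g ∈ ℝ^{m₁−1} with all coordinates strictly positive, and for any choice of x^i ∈ argmin_{x ∈ Γ_i ∩ f_g^{-1}(n)} x_i for each i ∈ [m₁−1], one has max_{x ∈ f_g^{-1}(n)} u^L(x,n) = max_{i ∈ [m₁−1]} u^L(x^i,n). -/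
/-!
Write `b_k = M_n - u^L(k,n) > 0` for the low actions `k < m₁`; on the simplex the leader gets
`M_n - ∑_{k<m₁} x_k b_k`, and on `Γ_i` only the term `x_i b_i` survives. Let `x ∈ f_g^{-1}(n)`
carry mass `t > 0` on the high actions and put `D = (∑_{k<m₁} x_k g_k) / t ≥ 0`. Then the
normalised high part `y` of `x` gives every `j ≠ n` payoff at most `D + W`, so the mixture of
`e_i` and `y` with weight `D / (g_i + D)` on `e_i` lies in `Γ_i ∩ f_g^{-1}(n)`; hence
`x^i_i (g_i + D) ≤ D`. As `∑_{k<m₁} x_k (g_k + D) = D`, the index minimising `b_i / (g_i + D)`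
satisfies `x^i_i b_i ≤ ∑_{k<m₁} x_k b_k`, i.e. `x^i` is at least as good for the leader as `x`.
If `t = 0` the same averaging works with weights `1`, because `x^i_i ≤ 1`.
-/

open scoped Classical
open Finset

noncomputable section

/-- The facet Γ_i = {x ∈ Δ_m : 1 − x_i = Σ_{k=m₁}^m x_k} (0-based indices: the paper's
actions m₁,…,m are the indices k with m₁−1 ≤ (k:ℕ)). -/
def GammaSet {m : ℕ} (m₁ : ℕ) (i : Fin m) : Set (Fin m → ℝ) :=
  {x ∈ simplex m |
    1 - x i = ∑ k ∈ Finset.univ.filter (fun k : Fin m => m₁ - 1 ≤ (k : ℕ)), x k}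

/-- W = min_{i∈[m], j∈[n]} μ(i,j) − 1. -/
def Wmin {m n : ℕ} (μ : Fin m → Fin n → ℝ) : ℝ :=
  sInf (Set.range fun p : Fin m × Fin n => μ p.1 p.2) - 1

/-- The follower payoff ũ_g^F (as a matrix; on Δ_m its linear extension is
ũ_g^F(x,j) = Σ_{i=m₁}^m x_i·μ(i,j) for j ≠ n and
ũ_g^F(x,n) = Σ_{i=1}^{m₁−1} x_i·g_i + W·Σ_{i=m₁}^m x_i). -/
def tuFg {m n : ℕ} (m₁ : ℕ) (μ : Fin m → Fin n → ℝ) (jn : Fin n) (g : Fin m → ℝ) :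
    Fin m → Fin n → ℝ :=
  fun i j =>
    if j = jn then (if (i : ℕ) < m₁ - 1 then g i else Wmin μ)
    else (if (i : ℕ) < m₁ - 1 then 0 else μ i j)

/-- f_g^{-1}(n) = {x ∈ Δ_m : n ∈ f_g(x)} where f_g is the BR-correspondence of ũ_g^F. -/
def finv {m n : ℕ} (m₁ : ℕ) (μ : Fin m → Fin n → ℝ) (jn : Fin n) (g : Fin m → ℝ) :
    Set (Fin m → ℝ) :=
  {x ∈ simplex m | jn ∈ BR (tuFg m₁ μ jn g) x}

lemma exists_mul_le_sum_mul_of_mul_le {ι 𝕜 : Type*} [Field 𝕜] [LinearOrder 𝕜]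
    [IsStrictOrderedRing 𝕜] {s : Finset ι} (hs : s.Nonempty) {x w b a : ι → 𝕜} {D : 𝕜}
    (hx : ∀ i ∈ s, 0 ≤ x i) (hw : ∀ i ∈ s, 0 < w i) (hb : ∀ i ∈ s, 0 ≤ b i)
    (ha : ∀ i ∈ s, a i * w i ≤ D) (hD : D ≤ ∑ i ∈ s, x i * w i) :
    ∃ i ∈ s, a i * b i ≤ ∑ k ∈ s, x k * b k := by
  obtain ⟨i, hi, hmin⟩ := s.exists_min_image (fun k => b k / w k) hs
  refine ⟨i, hi, ?_⟩
  set r := b i / w i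
  have hr : 0 ≤ r := div_nonneg (hb i hi) (hw i hi).le
  have hrw : r * w i = b i := div_mul_cancel₀ _ (hw i hi).ne'
  calc a i * b i = r * (a i * w i) := by rw [← hrw]; ring
    _ ≤ r * D := mul_le_mul_of_nonneg_left (ha i hi) hr
    _ ≤ r * ∑ k ∈ s, x k * w k := mul_le_mul_of_nonneg_left hD hr
    _ = ∑ k ∈ s, x k * (r * w k) := by rw [mul_sum]; exact sum_congr rfl fun k _ => by ring
    _ ≤ ∑ k ∈ s, x k * b k := sum_le_sum fun k hk =>
      mul_le_mul_of_nonneg_left ((le_div_iff₀ (hw k hk)).1 (hmin k hk)) (hx k hk)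

section

variable {m n : ℕ}

def lowActions (m₁ : ℕ) : Finset (Fin m) := univ.filter fun i => (i : ℕ) < m₁ - 1

def highActions (m₁ : ℕ) : Finset (Fin m) := univ.filter fun k => m₁ - 1 ≤ (k : ℕ)

@[simp]
lemma mem_lowActions {m₁ : ℕ} {i : Fin m} : i ∈ lowActions m₁ ↔ (i : ℕ) < m₁ - 1 := by
  simp [lowActions]

@[simp]
lemma mem_highActions {m₁ : ℕ} {k : Fin m} : k ∈ highActions m₁ ↔ m₁ - 1 ≤ (k : ℕ) := by
  simp [highActions]

lemma sum_lowActions_add_sum_highActions {M : Type*} [AddCommMonoid M] (m₁ : ℕ)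
    (f : Fin m → M) : ∑ i ∈ lowActions m₁, f i + ∑ k ∈ highActions m₁, f k = ∑ i, f i := by
  simpa [lowActions, highActions, not_lt] using
    sum_filter_add_sum_filter_not univ (fun i : Fin m => (i : ℕ) < m₁ - 1) f

lemma pay_add (u : Fin m → Fin n → ℝ) (x y : Fin m → ℝ) (j : Fin n) :
    pay u (x + y) j = pay u x j + pay u y j := by
  simp only [pay, Pi.add_apply, add_mul, sum_add_distrib]

lemma pay_smul (u : Fin m → Fin n → ℝ) (c : ℝ) (x : Fin m → ℝ) (j : Fin n) :
    pay u (c • x) j = c * pay u x j := by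
  simp only [pay, Pi.smul_apply, smul_eq_mul, mul_sum, mul_assoc]

lemma pay_single (u : Fin m → Fin n → ℝ) (i : Fin m) (j : Fin n) :
    pay u (Pi.single i 1) j = u i j := by
  simp [pay, Pi.single_apply]

lemma pay_eq_sub_sum_loss {m₁ : ℕ} {uL : Fin m → Fin n → ℝ} {jn : Fin n} {Mn : ℝ}
    (hhigh : ∀ k ∈ highActions m₁, uL k jn = Mn) {x : Fin m → ℝ} (hx : x ∈ simplex m) :
    pay uL x jn = Mn - ∑ k ∈ lowActions m₁, x k * (Mn - uL k jn) := by
  have hsum := hx.2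
  rw [← sum_lowActions_add_sum_highActions m₁] at hsum
  have hH : ∑ k ∈ highActions m₁, x k * uL k jn = (∑ k ∈ highActions m₁, x k) * Mn := by
    rw [sum_mul]
    exact sum_congr rfl fun k hk => by rw [hhigh k hk]
  rw [pay, ← sum_lowActions_add_sum_highActions m₁, hH]
  simp only [mul_sub, sum_sub_distrib, ← sum_mul]
  linear_combination Mn * hsum

lemma mem_GammaSet_iff {m₁ : ℕ} {i : Fin m} (hi : i ∈ lowActions m₁) {y : Fin m → ℝ} :
    y ∈ GammaSet m₁ i ↔ y ∈ simplex m ∧ ∀ k ∈ (lowActions m₁).erase i, y k = 0 := by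
  refine and_congr_right fun hy => ?_
  have hrest : ∑ k ∈ (lowActions m₁).erase i, y k = 1 - y i - ∑ k ∈ highActions m₁, y k := by
    rw [← hy.2, ← sum_lowActions_add_sum_highActions m₁, ← add_sum_erase _ _ hi]
    ring
  rw [← sum_eq_zero_iff_of_nonneg fun k _ => hy.1 k, hrest, sub_eq_zero]
  rfl

lemma pay_of_mem_GammaSet {m₁ : ℕ} {uL : Fin m → Fin n → ℝ} {jn : Fin n} {Mn : ℝ}
    (hhigh : ∀ k ∈ highActions m₁, uL k jn = Mn) {i : Fin m} (hi : i ∈ lowActions m₁)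
    {y : Fin m → ℝ} (hy : y ∈ GammaSet m₁ i) :
    pay uL y jn = Mn - y i * (Mn - uL i jn) := by
  obtain ⟨hyS, hy0⟩ := (mem_GammaSet_iff hi).1 hy
  rw [pay_eq_sub_sum_loss hhigh hyS, sum_eq_single_of_mem i hi fun k hk hki => by
    rw [hy0 k (mem_erase.2 ⟨hki, hk⟩), zero_mul]]

lemma tuFg_of_mem_lowActions_of_ne {m₁ : ℕ} {μ : Fin m → Fin n → ℝ} {jn j : Fin n}
    {g : Fin m → ℝ} {i : Fin m} (hi : i ∈ lowActions m₁) (hj : j ≠ jn) :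
    tuFg m₁ μ jn g i j = 0 := by
  simp_all [tuFg]

lemma tuFg_of_mem_lowActions_self {m₁ : ℕ} {μ : Fin m → Fin n → ℝ} {jn : Fin n}
    {g : Fin m → ℝ} {i : Fin m} (hi : i ∈ lowActions m₁) : tuFg m₁ μ jn g i jn = g i := by
  simp_all [tuFg]

lemma pay_tuFg_of_ne (m₁ : ℕ) (μ : Fin m → Fin n → ℝ) {jn j : Fin n} (g x : Fin m → ℝ)
    (hj : j ≠ jn) : pay (tuFg m₁ μ jn g) x j = ∑ k ∈ highActions m₁, x k * μ k j := by
  rw [pay, ← sum_lowActions_add_sum_highActions m₁,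
    sum_eq_zero fun i hi => by rw [tuFg_of_mem_lowActions_of_ne hi hj, mul_zero], zero_add]
  refine sum_congr rfl fun k hk => ?_
  simp_all [tuFg]

lemma pay_tuFg_self (m₁ : ℕ) (μ : Fin m → Fin n → ℝ) (jn : Fin n) (g x : Fin m → ℝ) :
    pay (tuFg m₁ μ jn g) x jn =
      ∑ i ∈ lowActions m₁, x i * g i + (∑ k ∈ highActions m₁, x k) * Wmin μ := by
  rw [pay, ← sum_lowActions_add_sum_highActions m₁, sum_mul]
  congr 1
  · exact sum_congr rfl fun i hi => by rw [tuFg_of_mem_lowActions_self hi]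
  · refine sum_congr rfl fun k hk => ?_
    simp_all [tuFg]

lemma exists_mem_GammaSet_inter_finv {m₁ : ℕ} {μ : Fin m → Fin n → ℝ} {jn : Fin n}
    {g : Fin m → ℝ} {i : Fin m} (hi : i ∈ lowActions m₁) (hgi : 0 < g i) {D : ℝ} (hD : 0 ≤ D)
    {y : Fin m → ℝ} (hy : y ∈ simplex m) (hyL : ∀ k ∈ lowActions m₁, y k = 0)
    (hyD : ∀ j ≠ jn, pay (tuFg m₁ μ jn g) y j ≤ D + Wmin μ) :
    ∃ z ∈ GammaSet m₁ i ∩ finv m₁ μ jn g, z i * (g i + D) = D := by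
  have hgD : 0 < g i + D := by linarith
  set θ := g i / (g i + D) with hθ
  have hθ0 : 0 ≤ θ := by positivity
  have hθ1 : 0 ≤ 1 - θ := by rw [sub_nonneg, div_le_one hgD]; linarith
  have hθD : θ * D = (1 - θ) * g i := by rw [hθ]; field_simp; ring
  set z : Fin m → ℝ := (1 - θ) • Pi.single i 1 + θ • y
  have hz : z ∈ simplex m :=
    convex_stdSimplex ℝ (Fin m) (single_mem_stdSimplex ℝ i) hy hθ1 hθ0 (by ring)
  have hzi : z i = 1 - θ := by simp [z, hyL i hi]
  have hyW : pay (tuFg m₁ μ jn g) y jn = Wmin μ := by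
    have hsum := hy.2
    rw [← sum_lowActions_add_sum_highActions m₁, sum_eq_zero hyL, zero_add] at hsum
    rw [pay_tuFg_self, hsum, sum_eq_zero fun k hk => by rw [hyL k hk, zero_mul]]
    ring
  refine ⟨z, ⟨(mem_GammaSet_iff hi).2 ⟨hz, fun k hk => ?_⟩, hz, fun j => ?_⟩, ?_⟩
  · obtain ⟨hki, hk⟩ := mem_erase.1 hk
    simp [z, hyL k hk, hki]
  · rcases eq_or_ne j jn with rfl | hj
    · exact le_rfl
    simp only [z, pay_add, pay_smul, pay_single, tuFg_of_mem_lowActions_self hi, hyW,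
      tuFg_of_mem_lowActions_of_ne hi hj]
    linarith [mul_le_mul_of_nonneg_left (hyD j hj) hθ0]
  · rw [hzi, hθ]
    field_simp
    ring

lemma exists_high_part_of_mem_finv {m₁ : ℕ} {μ : Fin m → Fin n → ℝ} {jn : Fin n}
    {g x : Fin m → ℝ} (hx : x ∈ finv m₁ μ jn g) (ht : 0 < ∑ k ∈ highActions m₁, x k) :
    ∃ y ∈ simplex m, (∀ k ∈ lowActions m₁, y k = 0) ∧ ∀ j ≠ jn,
      pay (tuFg m₁ μ jn g) y j ≤
        (∑ i ∈ lowActions m₁, x i * g i) / (∑ k ∈ highActions m₁, x k) + Wmin μ := by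
  set t := ∑ k ∈ highActions m₁, x k
  set y : Fin m → ℝ := fun k => if k ∈ lowActions m₁ then 0 else x k / t
  have hyH : ∀ k ∈ highActions m₁, y k = x k / t := fun k hk =>
    if_neg (by rw [mem_highActions] at hk; rw [mem_lowActions]; omega)
  have hyL : ∀ k ∈ lowActions m₁, y k = 0 := fun k hk => if_pos hk
  refine ⟨y, ⟨fun k => ?_, ?_⟩, hyL, fun j hj => ?_⟩
  · unfold y
    split_ifs
    exacts [le_rfl, div_nonneg (hx.1.1 k) ht.le]
  · rw [← sum_lowActions_add_sum_highActions m₁, sum_eq_zero hyL, zero_add,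
      sum_congr rfl hyH, ← sum_div, div_self ht.ne']
  · have hBR := hx.2 j
    rw [pay_tuFg_of_ne m₁ μ g x hj, pay_tuFg_self] at hBR
    rw [pay_tuFg_of_ne m₁ μ g y hj, sum_congr rfl fun k hk => by rw [hyH k hk, div_mul_eq_mul_div],
      ← sum_div, div_le_iff₀ ht, add_mul, div_mul_cancel₀ _ ht.ne']
    linarith

lemma exists_critical_mul_le_sum {m₁ : ℕ} {μ : Fin m → Fin n → ℝ} {jn : Fin n}
    {g : Fin m → ℝ} (hL : (lowActions (m := m) m₁).Nonempty) (hg : ∀ i ∈ lowActions m₁, 0 < g i)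
    {xs : Fin m → Fin m → ℝ}
    (hxs : ∀ i ∈ lowActions m₁, xs i ∈ GammaSet m₁ i ∩ finv m₁ μ jn g ∧
      ∀ z ∈ GammaSet m₁ i ∩ finv m₁ μ jn g, xs i i ≤ z i)
    {b : Fin m → ℝ} (hb : ∀ i ∈ lowActions m₁, 0 ≤ b i) {x : Fin m → ℝ}
    (hx : x ∈ finv m₁ μ jn g) :
    ∃ i ∈ lowActions m₁, xs i i * b i ≤ ∑ k ∈ lowActions m₁, x k * b k := by
  have hsum := hx.1.2
  rw [← sum_lowActions_add_sum_highActions m₁] at hsum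
  have hx0 : ∀ k ∈ lowActions m₁, 0 ≤ x k := fun k _ => hx.1.1 k
  rcases (sum_nonneg fun k _ => hx.1.1 k : 0 ≤ ∑ k ∈ highActions m₁, x k).eq_or_lt with ht | ht
  · refine exists_mul_le_sum_mul_of_mul_le hL hx0 (fun _ _ => one_pos) hb (D := 1)
      (fun i hi => ?_) ?_
    · rw [mul_one]
      exact (mem_Icc_of_mem_stdSimplex (hxs i hi).1.1.1 i).2
    · simp only [mul_one]
      linarith
  · set D := (∑ i ∈ lowActions m₁, x i * g i) / ∑ k ∈ highActions m₁, x k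
    have hD : 0 ≤ D :=
      div_nonneg (sum_nonneg fun i hi => mul_nonneg (hx0 i hi) (hg i hi).le) ht.le
    obtain ⟨y, hy, hyL, hyD⟩ := exists_high_part_of_mem_finv hx ht
    refine exists_mul_le_sum_mul_of_mul_le hL hx0 (w := fun i => g i + D) (D := D)
      (fun i hi => add_pos_of_pos_of_nonneg (hg i hi) hD) hb (fun i hi => ?_) ?_
    · obtain ⟨z, hz, hzi⟩ := exists_mem_GammaSet_inter_finv hi (hg i hi) hD hy hyL hyD
      exact (mul_le_mul_of_nonneg_right ((hxs i hi).2 z hz) (by linarith [hg i hi])).trans hzi.le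
    · have hDt : D * ∑ k ∈ highActions m₁, x k = ∑ i ∈ lowActions m₁, x i * g i :=
        div_mul_cancel₀ _ ht.ne'
      simp only [mul_add, sum_add_distrib, ← sum_mul]
      linarith [congrArg (D * ·) hsum]

end

theorem best_in_finv_attained_at_critical_general {m n : ℕ}
    (uL : Fin m → Fin n → ℝ) (jn : Fin n)
    (m₁ : ℕ) (hm₁ : 1 < m₁) (hm₁m : m₁ ≤ m)
    (Mn : ℝ)
    (hhigh : ∀ i : Fin m, m₁ - 1 ≤ (i : ℕ) → uL i jn = Mn)
    (hlow : ∀ i : Fin m, (i : ℕ) < m₁ - 1 → uL i jn < Mn)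
    (μ : Fin m → Fin n → ℝ)
    (g : Fin m → ℝ) (hg : ∀ i : Fin m, (i : ℕ) < m₁ - 1 → 0 < g i)
    (xs : Fin m → Fin m → ℝ)
    (hxs : ∀ i : Fin m, (i : ℕ) < m₁ - 1 →
      xs i ∈ GammaSet m₁ i ∩ finv m₁ μ jn g ∧
        ∀ x ∈ GammaSet m₁ i ∩ finv m₁ μ jn g, xs i i ≤ x i) :
    sSup ((fun x => pay uL x jn) '' finv m₁ μ jn g) =
      sSup {v : ℝ | ∃ i : Fin m, (i : ℕ) < m₁ - 1 ∧ v = pay uL (xs i) jn} := by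
  simp only [← mem_lowActions, ← mem_highActions] at hhigh hlow hg hxs
  have hL : (lowActions (m := m) m₁).Nonempty := ⟨⟨0, by omega⟩, by simp; omega⟩
  apply csSup_eq_csSup_of_forall_exists_le
  · rintro _ ⟨x, hx, rfl⟩
    obtain ⟨i, hi, hle⟩ := exists_critical_mul_le_sum hL hg hxs (b := fun k => Mn - uL k jn)
      (fun k hk => (sub_pos.2 (hlow k hk)).le) hx
    refine ⟨_, ⟨i, mem_lowActions.1 hi, rfl⟩, ?_⟩
    dsimp only
    rw [pay_eq_sub_sum_loss hhigh hx.1, pay_of_mem_GammaSet hhigh hi (hxs i hi).1.1]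
    linarith
  · rintro _ ⟨i, hi, rfl⟩
    exact ⟨_, ⟨xs i, (hxs i (mem_lowActions.2 hi)).1.2, rfl⟩, le_rfl⟩

/-- for g with strictly positive coordinates and any choice of the critical
points x^i ∈ argmin_{x ∈ Γ_i ∩ f_g^{-1}(n)} x_i, the leader's best payoff over f_g^{-1}(n)
is attained at one of the critical points:
max_{x ∈ f_g^{-1}(n)} u^L(x,n) = max_{i ∈ [m₁−1]} u^L(x^i,n). -/
theorem best_in_finv_attained_at_critical {m n : ℕ}
    (uL : Fin m → Fin n → ℝ) (jn : Fin n)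
    (m₁ : ℕ) (hm₁ : 1 < m₁) (hm₁m : m₁ ≤ m)
    (Mn : ℝ)
    (hhigh : ∀ i : Fin m, m₁ - 1 ≤ (i : ℕ) → uL i jn = Mn)
    (hlow : ∀ i : Fin m, (i : ℕ) < m₁ - 1 → uL i jn < Mn)
    (μ : Fin m → Fin n → ℝ) (hμ : IsProperCover uL μ {jn})
    (g : Fin m → ℝ) (hg : ∀ i : Fin m, (i : ℕ) < m₁ - 1 → 0 < g i)
    (xs : Fin m → Fin m → ℝ)
    (hxs : ∀ i : Fin m, (i : ℕ) < m₁ - 1 →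
      xs i ∈ GammaSet m₁ i ∩ finv m₁ μ jn g ∧
        ∀ x ∈ GammaSet m₁ i ∩ finv m₁ μ jn g, xs i i ≤ x i) :
    sSup ((fun x => pay uL x jn) '' finv m₁ μ jn g) =
      sSup {v : ℝ | ∃ i : Fin m, (i : ℕ) < m₁ - 1 ∧ v = pay uL (xs i) jn} :=
  best_in_finv_attained_at_critical_general uL jn m₁ hm₁ hm₁m Mn hhigh hlow μ g hg xs hxs
end
end
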